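/- arXiv:1603.04039 — 2 statements merged into one kernel-verified Lean document; each statement's English description precedes it below -/
import Mathlib

section
/- Let Φ satisfy the kernel assumptions with ‖Φ‖_∞ ≤ 1, and suppose h is small enough that 4 h^D ρ̄(y,h) < ‖Φ‖_∞ and the set A₁ = {x : Φ((x−y)/h) > ‖Φ‖_∞/2} has ρ-measure at least c·h^D·ρ(y) for some c > 0. Then the variance of the single-particle estimator is bounded below: Var(ρ̃(y,p,h)) ≥ (‖Φ‖_∞/(4h^D))² · c·h^D·ρ(y), i.e., the Monte Carlo error bound O(√(ρ(y)/(N h^D))) is asymptotically tight. -/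
/-!
The estimator `X = h^{-D} Φ((p - y)/h)` is bounded, and by the smallness assumption its mean
is below `a = M / (4 h^D)`, while on the event `p ∈ A₁` it exceeds `h^{-D} M / 2 = 2a`.
So `X` deviates from its mean by at least `a` on an event of probability at least
`c h^D ρ(y)`, and Chebyshev's inequality, read backwards, gives `Var X ≥ a² P(p ∈ A₁)`.
-/

open MeasureTheory ProbabilityTheory

lemma sq_mul_measureReal_le_variance {Ω : Type*} [MeasurableSpace Ω] {μ : Measure Ω}
    [IsFiniteMeasure μ] {X : Ω → ℝ} (hX : MemLp X 2 μ) {a : ℝ} (ha : 0 < a) {S : Set Ω}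
    (hS : ∀ ω ∈ S, a ≤ X ω - μ[X]) : a ^ 2 * μ.real S ≤ variance X μ := by
  have hSle : μ S ≤ ENNReal.ofReal (variance X μ / a ^ 2) :=
    (measure_mono fun ω hω => (hS ω hω).trans (le_abs_self _)).trans
      (meas_ge_le_variance_div_sq hX ha)
  rw [mul_comm, ← le_div_iff₀ (by positivity)]
  exact ENNReal.toReal_le_of_le_ofReal (div_nonneg (variance_nonneg _ _) (sq_nonneg _)) hSle

section Density

variable {Ω E : Type*} [MeasurableSpace Ω] [MeasurableSpace E] {μ : Measure Ω} {ν : Measure E}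
  {p : Ω → E} {ρ : E → ℝ}

lemma integral_comp_eq_integral_mul_of_map_eq_withDensity (hp : Measurable p)
    (hρ : Measurable ρ) (hρ0 : ∀ x, 0 ≤ ρ x)
    (hdens : μ.map p = ν.withDensity fun x => ENNReal.ofReal (ρ x))
    {g : E → ℝ} (hg : Measurable g) : ∫ ω, g (p ω) ∂μ = ∫ x, ρ x * g x ∂ν := by
  rw [← integral_map hp.aemeasurable hg.aestronglyMeasurable, hdens,
    integral_withDensity_eq_integral_toReal_smul hρ.ennreal_ofReal
      (Filter.Eventually.of_forall fun _ => ENNReal.ofReal_lt_top)]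
  simp only [ENNReal.toReal_ofReal (hρ0 _), smul_eq_mul]

lemma measureReal_preimage_eq_setIntegral_of_map_eq_withDensity (hp : Measurable p)
    (hρ : Measurable ρ) (hρ0 : ∀ x, 0 ≤ ρ x)
    (hdens : μ.map p = ν.withDensity fun x => ENNReal.ofReal (ρ x))
    {A : Set E} (hA : MeasurableSet A) : μ.real (p ⁻¹' A) = ∫ x in A, ρ x ∂ν := by
  rw [integral_eq_lintegral_of_nonneg_ae (Filter.Eventually.of_forall hρ0)
      hρ.aestronglyMeasurable, ← withDensity_apply _ hA, ← hdens, Measure.map_apply hp hA,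
    measureReal_def]

end Density

theorem single_particle_estimator_variance_lower_bound_general
    {D : ℕ} (h c : ℝ) (hh : 0 < h)
    (y : EuclideanSpace ℝ (Fin D))
    (Φ ρ : EuclideanSpace ℝ (Fin D) → ℝ)
    (hΦmeas : Measurable Φ)
    (hΦ0 : ∀ x, 0 ≤ Φ x) (hΦ1 : ∀ x, Φ x ≤ 1)
    (hρmeas : Measurable ρ)
    (hρ0 : ∀ x, 0 ≤ ρ x)
    {Ω : Type*} [MeasureSpace Ω] [IsProbabilityMeasure (volume : Measure Ω)]
    (p : Ω → EuclideanSpace ℝ (Fin D)) (hp : Measurable p)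
    (hdens : Measure.map p volume
      = (volume : Measure (EuclideanSpace ℝ (Fin D))).withDensity
          (fun x => ENNReal.ofReal (ρ x)))
    -- `M = ‖Φ‖_∞`
    (M : ℝ)
    -- h is small enough:
    (hsmall : 4 * h ^ (D : ℕ) * (h ^ (-(D : ℤ)) * ∫ x, ρ x * Φ (h⁻¹ • (x - y))) < M)
    -- the set A₁ carries ρ-mass at least c h^D ρ(y):
    (hA₁ : c * h ^ (D : ℕ) * ρ y
      ≤ ∫ x in {x | M / 2 < Φ (h⁻¹ • (x - y))}, ρ x) :
    (M / (4 * h ^ (D : ℕ))) ^ 2 * (c * h ^ (D : ℕ) * ρ y)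
      ≤ (∫ ω, (h ^ (-(D : ℤ)) * Φ (h⁻¹ • (p ω - y))) ^ 2)
        - (∫ ω, h ^ (-(D : ℤ)) * Φ (h⁻¹ • (p ω - y))) ^ 2 := by
  set φ : EuclideanSpace ℝ (Fin D) → ℝ := fun x => Φ (h⁻¹ • (x - y))
  set K : ℝ := h ^ (-(D : ℤ))
  set X : Ω → ℝ := fun ω => K * φ (p ω)
  set a : ℝ := M / (4 * h ^ D)
  have hK : K = (h ^ D)⁻¹ := by simp only [K, zpow_neg, zpow_natCast]
  have hK0 : 0 < K := hK ▸ inv_pos.mpr (pow_pos hh D)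
  have hφ : Measurable φ := hΦmeas.comp ((measurable_id.sub measurable_const).const_smul h⁻¹)
  have hX : MemLp X 2 := MemLp.of_bound ((hφ.comp hp).const_mul K).aestronglyMeasurable K
    (ae_of_all _ fun ω => by
      rw [Real.norm_of_nonneg (mul_nonneg hK0.le (hΦ0 _))]
      exact mul_le_of_le_one_right hK0.le (hΦ1 _))
  have hmean : ∫ ω, X ω = K * ∫ x, ρ x * φ x := by
    rw [integral_const_mul,
      integral_comp_eq_integral_mul_of_map_eq_withDensity hp hρmeas hρ0 hdens hφ]
  have hmean_nonneg : 0 ≤ ∫ ω, X ω := integral_nonneg fun ω => mul_nonneg hK0.le (hΦ0 _)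
  have hmean_lt : ∫ ω, X ω < a := by
    rw [lt_div_iff₀ (by positivity), mul_comm, hmean]
    exact hsmall
  have hfar : ∀ ω ∈ p ⁻¹' {x | M / 2 < φ x}, a ≤ X ω - ∫ ω, X ω := by
    intro ω hω
    have hthreshold : K * (M / 2) = 2 * a := by simp only [hK, a]; field_simp; ring
    have hlarge : K * (M / 2) < X ω := mul_lt_mul_of_pos_left hω hK0
    linarith
  calc a ^ 2 * (c * h ^ D * ρ y)
      ≤ a ^ 2 * volume.real (p ⁻¹' {x | M / 2 < φ x}) := by
        rw [measureReal_preimage_eq_setIntegral_of_map_eq_withDensity hp hρmeas hρ0 hdens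
          (measurableSet_lt measurable_const hφ)]
        gcongr
    _ ≤ variance X volume :=
        sq_mul_measureReal_le_variance hX (hmean_nonneg.trans_lt hmean_lt) hfar
    _ = _ := variance_eq_sub hX

/-- lower bound on the variance of the single-particle estimator,
showing the Monte Carlo error bound is asymptotically tight.  Here `M = ⨆ x, Φ x`
plays the role of `‖Φ‖_∞`, and `A₁ = {x : Φ((x−y)/h) > M/2}`. -/
theorem single_particle_estimator_variance_lower_bound
    {D : ℕ} (hD : 1 ≤ D) (h r c : ℝ) (hh : 0 < h) (hr : 0 < r) (hc : 0 < c)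
    (y : EuclideanSpace ℝ (Fin D))
    (Φ ρ : EuclideanSpace ℝ (Fin D) → ℝ)
    (hΦmeas : Measurable Φ)
    (hΦ0 : ∀ x, 0 ≤ Φ x) (hΦ1 : ∀ x, Φ x ≤ 1)
    (hΦsupp : ∀ x, r < ‖x‖ → Φ x = 0)
    (hΦint : ∫ x, Φ x = 1)
    (hρmeas : Measurable ρ)
    (hρ0 : ∀ x, 0 ≤ ρ x) (hρint : Integrable ρ) (hρ1 : ∫ x, ρ x = 1)
    {Ω : Type*} [MeasureSpace Ω] [IsProbabilityMeasure (volume : Measure Ω)]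
    (p : Ω → EuclideanSpace ℝ (Fin D)) (hp : Measurable p)
    (hdens : Measure.map p volume
      = (volume : Measure (EuclideanSpace ℝ (Fin D))).withDensity
          (fun x => ENNReal.ofReal (ρ x)))
    -- `M = ‖Φ‖_∞`
    (M : ℝ) (hM : M = ⨆ x, Φ x)
    -- h is small enough:
    (hsmall : 4 * h ^ (D : ℕ) * (h ^ (-(D : ℤ)) * ∫ x, ρ x * Φ (h⁻¹ • (x - y))) < M)
    -- the set A₁ carries ρ-mass at least c h^D ρ(y):
    (hA₁ : c * h ^ (D : ℕ) * ρ y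
      ≤ ∫ x in {x | M / 2 < Φ (h⁻¹ • (x - y))}, ρ x) :
    (M / (4 * h ^ (D : ℕ))) ^ 2 * (c * h ^ (D : ℕ) * ρ y)
      ≤ (∫ ω, (h ^ (-(D : ℤ)) * Φ (h⁻¹ • (p ω - y))) ^ 2)
        - (∫ ω, h ^ (-(D : ℤ)) * Φ (h⁻¹ • (p ω - y))) ^ 2 :=
  single_particle_estimator_variance_lower_bound_general h c hh y Φ ρ hΦmeas hΦ0 hΦ1 hρmeas hρ0 p hp
    hdens M hsmall hA₁
end

section
/- Let V₀ be an m×q real matrix with m ≥ q and smallest singular value σ_min > 0. If V₀ x = b + e with ‖e‖ ≤ ε, then the least-squares solution x̂ of V₀ x̂ = b satisfies ‖x̂ − x‖ ≤ ε/σ_min. Consequently, in the rescaled GFD system where the l-th derivative appears with coefficient h^l and the right-hand side error is O(M h³) (Taylor remainder with third derivatives bounded by M), the error in the computed l-th order derivative is O(M h^{3−l}) for l = 1, 2. -/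
open Matrix

/-- Euclidean norm of a vector in `Fin q → ℝ`. -/
noncomputable def enorm2 {q : ℕ} (v : Fin q → ℝ) : ℝ :=
  Real.sqrt (∑ i, (v i) ^ 2)

lemma enorm2_nonneg {q : ℕ} (v : Fin q → ℝ) : 0 ≤ enorm2 v := Real.sqrt_nonneg _

lemma enorm2_sq {q : ℕ} (v : Fin q → ℝ) : enorm2 v ^ 2 = ∑ i, (v i) ^ 2 :=
  Real.sq_sqrt (Finset.sum_nonneg fun i _ => sq_nonneg _)

lemma abs_dot_le {n : ℕ} (v w : Fin n → ℝ) : |v ⬝ᵥ w| ≤ enorm2 v * enorm2 w := by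
  have h := Finset.sum_mul_sq_le_sq_mul_sq Finset.univ v w
  calc |v ⬝ᵥ w| = Real.sqrt ((v ⬝ᵥ w) ^ 2) := (Real.sqrt_sq_eq_abs _).symm
    _ ≤ Real.sqrt ((∑ i, v i ^ 2) * ∑ i, w i ^ 2) := Real.sqrt_le_sqrt h
    _ = enorm2 v * enorm2 w := by
        rw [Real.sqrt_mul (Finset.sum_nonneg fun i _ => sq_nonneg _)]; rfl

lemma abs_coord_le_enorm2 {n : ℕ} (v : Fin n → ℝ) (i : Fin n) : |v i| ≤ enorm2 v := by
  calc |v i| = Real.sqrt ((v i) ^ 2) := (Real.sqrt_sq_eq_abs _).symm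
    _ ≤ enorm2 v := Real.sqrt_le_sqrt (Finset.single_le_sum
        (fun j _ => sq_nonneg (v j)) (Finset.mem_univ i))

/-- if `V₀` is an `m×q` real matrix (`m ≥ q`) whose smallest singular
value is `σmin > 0` (i.e. `σmin ‖v‖ ≤ ‖V₀ v‖` for all `v`), `V₀ x = b + e` with
`‖e‖ ≤ ε`, and `xh` is the least-squares solution of `V₀ xh = b` (normal equations),
then `‖xh − x‖ ≤ ε/σmin`.  Consequently, in the rescaled GFD system where the `l`-th
derivative appears with coefficient `h^l` and the right-hand side error is bounded by
`CM·h³` (third-order Taylor remainder), the error in the computed `l`-th derivative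
is bounded by `(CM/σmin)·h^{3−l}` for `l = 1, 2`. -/
theorem gfd_least_squares_error
    (m q : ℕ) (hmq : q ≤ m)
    (V₀ : Matrix (Fin m) (Fin q) ℝ)
    (σmin : ℝ) (hσ : 0 < σmin)
    (hsv : ∀ v : Fin q → ℝ, σmin * enorm2 v ≤ enorm2 (V₀.mulVec v))
    (x xh : Fin q → ℝ) (b e : Fin m → ℝ) (ε : ℝ)
    (hx : V₀.mulVec x = b + e) (he : enorm2 e ≤ ε)
    (hlsq : (V₀ᵀ * V₀).mulVec xh = V₀ᵀ.mulVec b) :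
    enorm2 (xh - x) ≤ ε / σmin ∧
    ∀ (h : ℝ) (CM : ℝ) (l : Fin q → ℕ) (d dh : Fin q → ℝ),
      0 < h → 0 ≤ CM →
      (∀ i, l i = 1 ∨ l i = 2) →
      (∀ i, x i = h ^ (l i) * d i) →
      (∀ i, xh i = h ^ (l i) * dh i) →
      ε ≤ CM * h ^ 3 →
      ∀ i, |dh i - d i| ≤ (CM / σmin) * h ^ (3 - l i) := by
  set u := xh - x with hu
  set w := V₀.mulVec u with hw
  -- normal equations give V₀ᵀ *ᵥ w = -(V₀ᵀ *ᵥ e)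
  have hne : V₀ᵀ.mulVec w = -(V₀ᵀ.mulVec e) := by
    have h1 : (V₀ᵀ * V₀).mulVec x = V₀ᵀ.mulVec (b + e) := by
      rw [← Matrix.mulVec_mulVec, hx]
    have h2 : V₀ᵀ.mulVec w = (V₀ᵀ * V₀).mulVec xh - (V₀ᵀ * V₀).mulVec x := by
      rw [hw, hu, ← Matrix.mulVec_mulVec, ← Matrix.mulVec_mulVec,
        Matrix.mulVec_sub]
      exact Matrix.mulVec_sub _ _ _
    rw [h2, hlsq, h1, Matrix.mulVec_add]
    abel
  -- key identity : w ⬝ᵥ w = -(e ⬝ᵥ w)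
  have hkey : w ⬝ᵥ w = -(e ⬝ᵥ w) := by
    have h3 : w ⬝ᵥ w = u ⬝ᵥ (V₀ᵀ.mulVec w) := by
      rw [Matrix.mulVec_transpose, hw, Matrix.dotProduct_mulVec]
      exact dotProduct_comm _ _
    rw [h3, hne, dotProduct_neg, Matrix.dotProduct_mulVec,
      Matrix.vecMul_transpose, ← hw, dotProduct_comm]
  have hww : enorm2 w ^ 2 ≤ enorm2 e * enorm2 w := by
    calc enorm2 w ^ 2 = ∑ i, (w i) ^ 2 := enorm2_sq w
      _ = w ⬝ᵥ w := by simp [dotProduct, sq]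
      _ = -(e ⬝ᵥ w) := hkey
      _ ≤ |e ⬝ᵥ w| := neg_le_abs _
      _ ≤ enorm2 e * enorm2 w := abs_dot_le e w
  have hwle : enorm2 w ≤ ε := by
    rcases eq_or_lt_of_le (enorm2_nonneg w) with h0 | h0
    · rw [← h0]
      exact le_trans (enorm2_nonneg e) he
    · have h4 : enorm2 w ≤ enorm2 e := by
        have := hww
        nlinarith
      exact le_trans h4 he
  have hmain : enorm2 u ≤ ε / σmin := by
    rw [le_div_iff₀ hσ, mul_comm]
    exact le_trans (hsv u) hwle
  refine ⟨hmain, ?_⟩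
  intro h CM l d dh hh hCM hl hxd hxhd heps i
  have hpow : (0:ℝ) < h ^ (l i) := pow_pos hh _
  have hdiff : xh i - x i = h ^ (l i) * (dh i - d i) := by
    rw [hxd i, hxhd i]; ring
  have habs : h ^ (l i) * |dh i - d i| ≤ ε / σmin := by
    calc h ^ (l i) * |dh i - d i| = |xh i - x i| := by
          rw [hdiff, abs_mul, abs_of_pos hpow]
      _ = |u i| := rfl
      _ ≤ enorm2 u := abs_coord_le_enorm2 u i
      _ ≤ ε / σmin := hmain
  have hfinal : |dh i - d i| ≤ ε / σmin / h ^ (l i) := by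
    rw [le_div_iff₀ hpow, mul_comm]; exact habs
  refine le_trans hfinal ?_
  rw [div_div, div_le_iff₀ (mul_pos hσ hpow)]
  have hpow3 : h ^ (3 - l i) * h ^ (l i) = h ^ 3 := by
    rw [← pow_add]
    congr 1
    rcases hl i with h1 | h1 <;> omega
  calc ε ≤ CM * h ^ 3 := heps
    _ = CM / σmin * h ^ (3 - l i) * (σmin * h ^ (l i)) := by
        have h5 : CM / σmin * h ^ (3 - l i) * (σmin * h ^ (l i)) =
            CM * (h ^ (3 - l i) * h ^ (l i)) * (σmin / σmin) := by ring
        rw [h5, div_self hσ.ne', hpow3, mul_one]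
end
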